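/- arXiv:1410.1318 — 2 statements merged into one kernel-verified Lean document; each statement's English description precedes it below -/
import Mathlib

section
/- Let c be a rational number with 1/3 < c ≤ 2/3. Then for infinitely many values of n, there exists a Boolean function f : F_2^n → F_2 with exactly cn crucial terms, T^{≥3}(f) = cn, such that every 0-restriction f' of f on n' variables with n' > n − ⌈(3c−1)n/5⌉ satisfies T^{≥3}(f') > n'/3. -/
/-!
Take `m = c n` cubic monomials on `n` variables in which every variable occurs at most twice:
the monomials `x_i x_{i+1} y_{⌊i/2⌋}` along a cycle `x_0, …, x_{m-1}`, with `m/2` extra hub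
variables `y_j` (this needs `3m ≤ 2n`, i.e. `c ≤ 2/3`). Setting `r` variables to `0` deletes
exactly the monomials meeting them, at most `2r` of them, and by uniqueness of the ANF the
survivors are the crucial terms of the restriction. So `n' = n - r` variables keep at least
`cn - 2r` crucial terms, which exceeds `n'/3` as soon as `5r < (3c - 1)n`.
-/

open Finset

/-- Evaluation of the multilinear polynomial over `F₂` whose set of monomials is `M`. -/
def anfEval {n : ℕ} (M : Finset (Finset (Fin n))) (x : Fin n → ZMod 2) : ZMod 2 :=
  ∑ S ∈ M, ∏ j ∈ S, x j

/-- `M` is the algebraic normal form (set of monomials) of the Boolean function `f`. -/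
def IsANF {n : ℕ} (f : (Fin n → ZMod 2) → ZMod 2) (M : Finset (Finset (Fin n))) : Prop :=
  ∀ x, f x = anfEval M x

/-- The number of crucial terms (monomials of degree at least 3) of an ANF. -/
def crucialCount {n : ℕ} (M : Finset (Finset (Fin n))) : ℕ :=
  (M.filter fun S => 3 ≤ S.card).card

/-- The `0`-restriction of `f` keeping exactly the variables in `K` (all other
variables are set to the constant `0`). It is a Boolean function on `K.card` variables. -/
def zeroRestrict {n : ℕ} (f : (Fin n → ZMod 2) → ZMod 2) (K : Finset (Fin n)) :
    (Fin n → ZMod 2) → ZMod 2 :=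
  fun x => f fun i => if i ∈ K then x i else 0

theorem Finset.prod_ite_mem_zero {ι R : Type*} [CommMonoidWithZero R] [DecidableEq ι]
    (T S : Finset ι) (x : ι → R) :
    ∏ j ∈ T, (if j ∈ S then x j else 0) = if T ⊆ S then ∏ j ∈ T, x j else 0 := by
  split_ifs with hTS
  · exact prod_congr rfl fun j hj => if_pos (hTS hj)
  · obtain ⟨j, hjT, hjS⟩ := not_subset.mp hTS
    exact prod_eq_zero hjT (if_neg hjS)

section ANF

variable {n : ℕ}

theorem anfEval_ite_mem (M : Finset (Finset (Fin n))) (K : Finset (Fin n)) (x : Fin n → ZMod 2) :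
    anfEval M (fun j => if j ∈ K then x j else 0) = anfEval {S ∈ M | S ⊆ K} x := by
  simp only [anfEval, prod_ite_mem_zero, sum_filter]

theorem IsANF.zeroRestrict {f : (Fin n → ZMod 2) → ZMod 2} {M : Finset (Finset (Fin n))}
    (hf : IsANF f M) (K : Finset (Fin n)) : IsANF (zeroRestrict f K) {S ∈ M | S ⊆ K} :=
  fun x => (hf _).trans (anfEval_ite_mem M K x)

theorem anfEval_symmDiff (M M' : Finset (Finset (Fin n))) (x : Fin n → ZMod 2) :
    anfEval (symmDiff M M') x = anfEval M x + anfEval M' x := by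
  have hsdiff := sum_sdiff (f := fun S => ∏ j ∈ S, x j) (inter_subset_union (s := M) (t := M'))
  have hunion := sum_union_inter (f := fun S => ∏ j ∈ S, x j) (s₁ := M) (s₂ := M')
  rw [anfEval, anfEval, anfEval, symmDiff_eq_sup_sdiff_inf]
  -- the monomials of `M ∩ M'` are counted twice, and `2 = 0` in `ZMod 2`
  have two : (2 : ZMod 2) = 0 := rfl
  linear_combination hsdiff + hunion - (∑ S ∈ M ∩ M', ∏ j ∈ S, x j) * two

theorem eq_empty_of_anfEval_eq_zero {D : Finset (Finset (Fin n))} (hD : ∀ x, anfEval D x = 0) :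
    D = ∅ := by
  by_contra hne
  obtain ⟨S, hS, hmin⟩ := exists_min_image D card (nonempty_iff_ne_empty.mpr hne)
  have hbelow : {T ∈ D | T ⊆ S} = {S} := by
    ext T
    simp only [mem_filter, mem_singleton]
    constructor
    · rintro ⟨hT, hTS⟩
      exact eq_of_subset_of_card_le hTS (hmin T hT)
    · rintro rfl
      exact ⟨hS, subset_rfl⟩
  have := hD fun j => if j ∈ S then 1 else 0
  rw [anfEval_ite_mem, hbelow, anfEval, sum_singleton, prod_const_one] at this
  exact one_ne_zero this

theorem anfEval_injective : Function.Injective (anfEval (n := n)) := by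
  intro M M' h
  rw [← symmDiff_eq_bot]
  refine eq_empty_of_anfEval_eq_zero fun x => ?_
  rw [anfEval_symmDiff, congrFun h x, CharTwo.add_self_eq_zero]

theorem IsANF.unique {f : (Fin n → ZMod 2) → ZMod 2} {M M' : Finset (Finset (Fin n))}
    (hM : IsANF f M) (hM' : IsANF f M') : M = M' :=
  anfEval_injective <| funext fun x => (hM x).symm.trans (hM' x)

end ANF

theorem card_filter_not_subset_le {α : Type*} [DecidableEq α] [Fintype α]
    (M : Finset (Finset α)) {d : ℕ} (hdeg : ∀ v, #{S ∈ M | v ∈ S} ≤ d) (K : Finset α) :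
    #{S ∈ M | ¬S ⊆ K} ≤ #Kᶜ * d := by
  calc #{S ∈ M | ¬S ⊆ K}
      ≤ #(Kᶜ.biUnion fun v => {S ∈ M | v ∈ S}) := by
        refine card_le_card fun S hS => ?_
        obtain ⟨hSM, hSK⟩ := mem_filter.mp hS
        obtain ⟨v, hvS, hvK⟩ := not_subset.mp hSK
        exact mem_biUnion.mpr ⟨v, mem_compl.mpr hvK, mem_filter.mpr ⟨hSM, hvS⟩⟩
    _ ≤ #Kᶜ * d := card_biUnion_le_card_mul _ _ _ fun v _ => hdeg v

theorem crucialCount_eq_card {n : ℕ} {M : Finset (Finset (Fin n))} (hM : ∀ S ∈ M, 3 ≤ #S) :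
    crucialCount M = #M := by
  rw [crucialCount, filter_true_of_mem hM]

theorem card_le_crucialCount_zeroRestrict_add {n : ℕ} {f : (Fin n → ZMod 2) → ZMod 2}
    {M : Finset (Finset (Fin n))} (hf : IsANF f M) (hM : ∀ S ∈ M, 3 ≤ #S)
    (hdeg : ∀ v, #{S ∈ M | v ∈ S} ≤ 2) {K : Finset (Fin n)} {M' : Finset (Finset (Fin n))}
    (hM' : IsANF (zeroRestrict f K) M') :
    #M ≤ crucialCount M' + 2 * #Kᶜ := by
  obtain rfl := (hf.zeroRestrict K).unique hM'
  rw [crucialCount_eq_card fun S hS => hM S (mem_filter.mp hS).1,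
    ← card_filter_add_card_filter_not (s := M) (· ⊆ K), mul_comm]
  exact Nat.add_le_add_left (card_filter_not_subset_le M hdeg K) _

/-- The cycle edge `{i, i + 1 mod m}` on `0, …, m - 1` together with the hub `m + i / 2`. -/
def cycleTriple (m i : ℕ) : Finset ℕ := {i, if i + 1 = m then 0 else i + 1, m + i / 2}

section CycleTriple

variable {m i : ℕ}

theorem mem_cycleTriple {v : ℕ} :
    v ∈ cycleTriple m i ↔ v = i ∨ v = (if i + 1 = m then 0 else i + 1) ∨ v = m + i / 2 := by
  simp [cycleTriple]

theorem card_cycleTriple (hm : 3 ≤ m) (hi : i < m) : #(cycleTriple m i) = 3 := by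
  rw [cycleTriple, card_eq_three]
  exact ⟨_, _, _, by split_ifs <;> omega, by omega, by split_ifs <;> omega, rfl⟩

theorem lt_of_mem_cycleTriple {n v : ℕ} (hmn : 3 * m ≤ 2 * n) (hi : i < m)
    (hv : v ∈ cycleTriple m i) : v < n := by
  rw [mem_cycleTriple] at hv
  split_ifs at hv <;> omega

theorem cycleTriple_injOn (hm : 3 ≤ m) : Set.InjOn (cycleTriple m) (range m) := by
  intro i hi j hj hij
  simp only [coe_range, Set.mem_Iio] at hi hj
  have hij' : i ∈ cycleTriple m j := hij ▸ mem_cycleTriple.mpr (Or.inl rfl)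
  have hji : j ∈ cycleTriple m i := hij ▸ mem_cycleTriple.mpr (Or.inl rfl)
  have hhub : m + i / 2 ∈ cycleTriple m j := hij ▸ mem_cycleTriple.mpr (Or.inr (Or.inr rfl))
  rw [mem_cycleTriple] at hij' hji hhub
  split_ifs at hij' hji hhub <;> omega

theorem card_filter_mem_cycleTriple_le (v : ℕ) : #{i ∈ range m | v ∈ cycleTriple m i} ≤ 2 := by
  have hsub : {i ∈ range m | v ∈ cycleTriple m i} ⊆
      if v < m then {v, if v = 0 then m - 1 else v - 1} else {2 * (v - m), 2 * (v - m) + 1} := by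
    intro i hi
    rw [mem_filter, mem_range, mem_cycleTriple] at hi
    split_ifs at hi ⊢ <;> simp only [mem_insert, mem_singleton] <;> omega
  refine (card_le_card hsub).trans ?_
  split_ifs <;> exact card_le_two

end CycleTriple

theorem exists_triple_system {m n : ℕ} (hm : 3 ≤ m) (hmn : 3 * m ≤ 2 * n) :
    ∃ M : Finset (Finset (Fin n)), #M = m ∧ (∀ S ∈ M, #S = 3) ∧ ∀ v, #{S ∈ M | v ∈ S} ≤ 2 := by
  set toFin : Finset ℕ → Finset (Fin n) := fun S => S.preimage Fin.val Fin.val_injective.injOn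
  have image_toFin : ∀ i < m, (toFin (cycleTriple m i)).image Fin.val = cycleTriple m i :=
    fun i hi => by
      rw [image_preimage, filter_true_of_mem]
      exact fun v hv => ⟨⟨v, lt_of_mem_cycleTriple hmn hi hv⟩, rfl⟩
  have hinj : Set.InjOn (toFin ∘ cycleTriple m) (range m) := fun i hi j hj hij =>
    cycleTriple_injOn hm hi hj <| by
      rw [← image_toFin i (mem_range.mp hi), ← image_toFin j (mem_range.mp hj)]
      exact congrArg _ hij
  refine ⟨(range m).image (toFin ∘ cycleTriple m), ?_, ?_, fun v => ?_⟩
  · rw [card_image_of_injOn hinj, card_range]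
  · simp only [mem_image, mem_range, Function.comp_apply]
    rintro _ ⟨i, hi, rfl⟩
    rw [← card_image_of_injective _ Fin.val_injective, image_toFin i hi, card_cycleTriple hm hi]
  · rw [filter_image]
    calc _ ≤ #{i ∈ range m | v ∈ toFin (cycleTriple m i)} := card_image_le
      _ = #{i ∈ range m | ↑v ∈ cycleTriple m i} := by simp [toFin]
      _ ≤ 2 := card_filter_mem_cycleTriple_le v.val

/-- for rational `1/3 < c ≤ 2/3`, for infinitely many `n` there is a Boolean
function on `n` variables with exactly `c·n` crucial terms such that every `0`-restriction
on `n' > n - ⌈(3c-1)n/5⌉` variables has more than `n'/3` crucial terms. -/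
theorem stmt2 (c : ℚ) (hc1 : 1 / 3 < c) (hc2 : c ≤ 2 / 3) :
    ∀ N : ℕ, ∃ n ≥ N, ∃ (f : (Fin n → ZMod 2) → ZMod 2) (M : Finset (Finset (Fin n))),
      IsANF f M ∧ (crucialCount M : ℚ) = c * n ∧
      ∀ K : Finset (Fin n), (n : ℤ) - ⌈(3 * c - 1) * n / 5⌉ < (K.card : ℤ) →
        ∀ M' : Finset (Finset (Fin n)), IsANF (zeroRestrict f K) M' →
          (K.card : ℚ) / 3 < (crucialCount M' : ℚ) := by
  intro N
  have hc0 : 0 < c := by linarith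
  obtain ⟨p, hp⟩ := Int.eq_ofNat_of_zero_le (Rat.num_nonneg.mpr hc0.le)
  have hp1 : 1 ≤ p := by have := Rat.num_pos.mpr hc0; omega
  set k := max N 3
  set n := c.den * k
  set m := p * k
  have hmn : (m : ℚ) = c * n := by
    rw [Nat.cast_mul, Nat.cast_mul, ← mul_assoc, Rat.mul_den_eq_num, hp, Int.cast_natCast]
  have h3m : 3 * m ≤ 2 * n := by
    have : (3 * m : ℚ) ≤ 2 * n := by rw [hmn]; nlinarith [n.cast_nonneg (α := ℚ)]
    exact_mod_cast this
  obtain ⟨M, hMcard, hM3, hdeg⟩ :=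
    exists_triple_system (Nat.mul_le_mul hp1 (le_max_right N 3)) h3m
  have hM3' : ∀ S ∈ M, 3 ≤ #S := fun S hS => (hM3 S hS).ge
  refine ⟨n, (le_max_left N 3).trans (Nat.le_mul_of_pos_left k c.pos), anfEval M, M, fun _ => rfl,
    by rw [crucialCount_eq_card hM3', hMcard, hmn], fun K hK M' hM' => ?_⟩
  have hcount : (m : ℚ) ≤ crucialCount M' + 2 * #Kᶜ := by
    exact_mod_cast hMcard ▸ card_le_crucialCount_zeroRestrict_add (fun _ => rfl) hM3' hdeg hM'
  have hcompl : (#Kᶜ : ℚ) + #K = n := by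
    exact_mod_cast (card_compl_add_card K).trans (Fintype.card_fin n)
  have hremoved : (n : ℚ) - #K < (3 * c - 1) * n / 5 := by
    exact_mod_cast Int.lt_ceil.mp (sub_lt_comm.mp hK)
  linarith
end

section
/- Let 0 < ε < 2 and let f : F_2^n → F_2 have algebraic thickness T(f) ≤ n^{3−ε}. Then there exists an affine subspace of F_2^n of dimension at least (4/15)·√((2/3)·n^ε) − 3 on which f is constant. -/
open Finset

/-
After an affine change of variables `f` has an ANF `M` with at most `n ^ (3 - ε)` monomials.
Averaging over all `k`-subsets `K` of the variables, with `k = ⌊√(2/3 · n ^ ε)⌋`, some `K` contains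
at most `|M| k³ / n³ ≤ 2k/3` crucial terms. Zero the variables outside `K`, and then, one at a
time, a variable lying in two crucial terms. Once the crucial terms are pairwise disjoint, zeroing
one variable of each leaves a function of degree at most two. A quadratic function on an
`m`-dimensional `F₂`-space is constant on an affine subspace of dimension at least `(m - 1) / 2`:
split off a hyperbolic pair `a, b` of its polar form and recurse on their orthogonal complement,
or, if the polar form vanishes, the function is affine and constant on a hyperplane. The
bookkeeping gives `4k ≤ 10 d + 2c + 5` for the dimension `d` obtained from `c` crucial terms on
`k` variables.
-/

open Module

section Quadratic

variable {R E : Type*} [CommRing R] [AddCommGroup E]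

def secondDiff (g : E → R) (x y : E) : R := g (x + y) - g x - g y + g 0

/-- Degree at most two in the sense of finite differences; affine functions are included. -/
def IsQuadratic (g : E → R) : Prop :=
  ∀ x y z, secondDiff g (x + y) z = secondDiff g x z + secondDiff g y z

lemma secondDiff_comm (g : E → R) (x y : E) : secondDiff g x y = secondDiff g y x := by
  simp only [secondDiff, add_comm x y]; ring

lemma secondDiff_zero_left (g : E → R) (y : E) : secondDiff g 0 y = 0 := by
  simp [secondDiff]

lemma IsQuadratic.secondDiff_add_right {g : E → R} (hg : IsQuadratic g) (x y z : E) :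
    secondDiff g z (x + y) = secondDiff g z x + secondDiff g z y := by
  simp only [secondDiff_comm g z]; exact hg x y z

lemma secondDiff_sum {ι : Type*} (s : Finset ι) (F : ι → E → R) (x y : E) :
    secondDiff (fun x => ∑ i ∈ s, F i x) x y = ∑ i ∈ s, secondDiff (F i) x y := by
  simp [secondDiff, Finset.sum_add_distrib, Finset.sum_sub_distrib]

lemma isQuadratic_sum {ι : Type*} (s : Finset ι) {F : ι → E → R}
    (hF : ∀ i ∈ s, IsQuadratic (F i)) : IsQuadratic fun x => ∑ i ∈ s, F i x := by
  intro x y z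
  simp only [secondDiff_sum, ← Finset.sum_add_distrib]
  exact Finset.sum_congr rfl fun i hi => hF i hi x y z

lemma isQuadratic_prod {ι : Type*} [DecidableEq ι] {S : Finset ι} (hS : S.card ≤ 2) :
    IsQuadratic fun x : ι → R => ∏ j ∈ S, x j := by
  intro x y z
  interval_cases h : S.card
  · simp [Finset.card_eq_zero.mp h, secondDiff]
  · obtain ⟨i, rfl⟩ := Finset.card_eq_one.mp h
    simp [secondDiff]
  · obtain ⟨i, j, hij, rfl⟩ := Finset.card_eq_two.mp h
    simp only [secondDiff, Pi.add_apply, Finset.prod_pair hij, Pi.zero_apply, mul_zero, add_zero]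
    ring

end Quadratic

section F2

lemma ZMod.eq_zero_or_eq_one (t : ZMod 2) : t = 0 ∨ t = 1 :=
  (em (t = 0)).imp_right (Fin.eq_one_of_ne_zero t)

variable {E F : Type*} [AddCommGroup E] [Module (ZMod 2) E] [FiniteDimensional (ZMod 2) E]
  [AddCommGroup F] [Module (ZMod 2) F] [FiniteDimensional (ZMod 2) F]

lemma Submodule.exists_le_forall_eq_zero_of_map_add (P : Submodule (ZMod 2) E) (φ : E → F)
    (hφ : ∀ x ∈ P, ∀ y ∈ P, φ (x + y) = φ x + φ y) :
    ∃ Q ≤ P, finrank (ZMod 2) P ≤ finrank (ZMod 2) Q + finrank (ZMod 2) F ∧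
      ∀ y ∈ Q, φ y = 0 := by
  let φP : P →ₗ[ZMod 2] F :=
    (AddMonoidHom.mk' (fun x : P => φ x) fun x y => hφ x x.2 y y.2).toZModLinearMap 2
  refine ⟨(LinearMap.ker φP).map P.subtype, Submodule.map_subtype_le _ _, ?_, ?_⟩
  · rw [Submodule.finrank_map_subtype_eq, ← LinearMap.finrank_range_add_finrank_ker φP]
    have := Submodule.finrank_le (LinearMap.range φP)
    omega
  · rintro _ ⟨x, hx, rfl⟩
    exact hx

variable {g : E → ZMod 2}

lemma exists_const_of_secondDiff_eq_zero (P : Submodule (ZMod 2) E)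
    (hP : ∀ x ∈ P, ∀ y ∈ P, secondDiff g x y = 0) :
    ∃ W ≤ P, finrank (ZMod 2) P ≤ finrank (ZMod 2) W + 1 ∧ ∀ w ∈ W, g w = g 0 := by
  obtain ⟨W, hWP, hdim, hW⟩ := P.exists_le_forall_eq_zero_of_map_add (fun x => g x - g 0)
    fun x hx y hy => by
      have := hP x hx y hy
      simp only [secondDiff] at this
      linear_combination this
  exact ⟨W, hWP, by simpa using hdim, fun w hw => sub_eq_zero.mp (hW w hw)⟩

lemma IsQuadratic.exists_const_of_hyperbolic (hg : IsQuadratic g)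
    {P Q W' : Submodule (ZMod 2) E} {a b v' : E} (ha : a ∈ P) (hb : b ∈ P)
    (hab : secondDiff g a b = 1) (hQP : Q ≤ P)
    (hQ : ∀ y ∈ Q, secondDiff g a y = 0 ∧ secondDiff g b y = 0)
    (hW'Q : W' ≤ Q) (hv'Q : v' ∈ Q) (hconst : ∀ w ∈ W', g (v' + w) = g v') :
    ∃ W ≤ P, ∃ v ∈ P, finrank (ZMod 2) W = finrank (ZMod 2) W' + 1 ∧
      ∀ w ∈ W, g (v + w) = g v := by
  obtain ⟨x₀, hx₀P, hx₀Q, hx₀a⟩ :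
      ∃ x₀ ∈ P, (∀ y ∈ Q, secondDiff g x₀ y = 0) ∧ g (x₀ + a) = g x₀ := by
    -- `y ↦ g (y + a) - g y` changes by `secondDiff g b a = 1` from `0` to `b`
    by_cases h : g a = g 0
    · exact ⟨0, P.zero_mem, fun y _ => secondDiff_zero_left g y, by simpa using h⟩
    · refine ⟨b, hb, fun y hy => (hQ y hy).2, ?_⟩
      have h1 : g a - g 0 = 1 := (ZMod.eq_zero_or_eq_one _).resolve_left (sub_ne_zero.mpr h)
      have h2 := secondDiff_comm g a b ▸ hab
      simp only [secondDiff] at h2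
      grind
  have hshift : ∀ y ∈ Q, g (x₀ + y + a) = g (x₀ + y) := by
    intro y hy
    have h := hg x₀ y a
    rw [secondDiff_comm g y a, (hQ y hy).1, add_zero] at h
    simp only [secondDiff] at h
    linear_combination h + hx₀a
  have hsplit : ∀ y ∈ Q, g (x₀ + y) = g x₀ + g y - g 0 := by
    intro y hy
    have h := hx₀Q y hy
    simp only [secondDiff] at h
    linear_combination h
  have haW' : a ∉ W' := fun h => by
    simpa [secondDiff_comm g b a, hab] using (hQ a (hW'Q h)).2
  refine ⟨W' ⊔ (ZMod 2) ∙ a,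
    sup_le (hW'Q.trans hQP) ((Submodule.span_singleton_le_iff_mem _ _).mpr ha),
    x₀ + v', P.add_mem hx₀P (hQP hv'Q), Submodule.finrank_sup_span_singleton haW', ?_⟩
  intro w hw
  obtain ⟨w', hw', z, hz, rfl⟩ := Submodule.mem_sup.mp hw
  obtain ⟨t, rfl⟩ := Submodule.mem_span_singleton.mp hz
  have hy : v' + w' ∈ Q := Q.add_mem hv'Q (hW'Q hw')
  have hdrop : g (x₀ + v' + (w' + t • a)) = g (x₀ + (v' + w')) := by
    rcases ZMod.eq_zero_or_eq_one t with rfl | rfl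
    · simp [add_assoc]
    · rw [← hshift _ hy]; simp [add_assoc]
  rw [hdrop, hsplit _ hy, hsplit _ hv'Q, hconst w' hw']

theorem IsQuadratic.exists_const_on_affineSubspace (hg : IsQuadratic g)
    (P : Submodule (ZMod 2) E) :
    ∃ W ≤ P, ∃ v ∈ P, finrank (ZMod 2) P ≤ 2 * finrank (ZMod 2) W + 1 ∧
      ∀ w ∈ W, g (v + w) = g v := by
  by_cases hdeg : ∀ x ∈ P, ∀ y ∈ P, secondDiff g x y = 0
  · obtain ⟨W, hWP, hdim, hW⟩ := exists_const_of_secondDiff_eq_zero P hdeg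
    exact ⟨W, hWP, 0, P.zero_mem, by omega, by simpa using hW⟩
  push Not at hdeg
  obtain ⟨a, ha, b, hb, hab⟩ := hdeg
  replace hab : secondDiff g a b = 1 := (ZMod.eq_zero_or_eq_one _).resolve_left hab
  obtain ⟨Q, hQP, hdimQ, hQ⟩ := P.exists_le_forall_eq_zero_of_map_add
    (fun y => (secondDiff g a y, secondDiff g b y)) fun x _ y _ => by
      simp [hg.secondDiff_add_right]
  replace hQ : ∀ y ∈ Q, secondDiff g a y = 0 ∧ secondDiff g b y = 0 :=
    fun y hy => Prod.mk_eq_zero.mp (hQ y hy)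
  have hbQ : b ∉ Q := fun h => by simpa [hab] using (hQ b h).1
  have hlt : finrank (ZMod 2) Q < finrank (ZMod 2) P :=
    Submodule.finrank_lt_finrank_of_lt (lt_of_le_of_ne hQP (by rintro rfl; exact hbQ hb))
  obtain ⟨W', hW'Q, v', hv'Q, hdim', hconst'⟩ := hg.exists_const_on_affineSubspace Q
  obtain ⟨W, hWP, v, hvP, hdimW, hconst⟩ :=
    hg.exists_const_of_hyperbolic ha hb hab hQP hQ hW'Q hv'Q hconst'
  refine ⟨W, hWP, v, hvP, ?_, hconst⟩
  simp only [Module.finrank_prod, Module.finrank_self] at hdimQ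
  omega
termination_by finrank (ZMod 2) P

end F2

section Supported

variable (K : Type*) {ι : Type*} [Field K]

def Pi.supported (V : Finset ι) : Submodule K (ι → K) :=
  ⨅ i ∈ (↑V : Set ι)ᶜ, LinearMap.ker (LinearMap.proj i)

variable {K}

lemma Pi.mem_supported {V : Finset ι} {x : ι → K} :
    x ∈ Pi.supported K V ↔ ∀ i ∉ V, x i = 0 := by
  simp [Pi.supported, Submodule.mem_iInf]

lemma Pi.supported_mono {V V' : Finset ι} (h : V ⊆ V') :
    Pi.supported K V ≤ Pi.supported K V' := fun _ hx =>
  Pi.mem_supported.mpr fun i hi => Pi.mem_supported.mp hx i fun h' => hi (h h')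

lemma Pi.finrank_supported [Fintype ι] (V : Finset ι) :
    finrank K (Pi.supported K V) = V.card := by
  classical
  rw [Pi.supported, (LinearMap.iInfKerProjEquiv K (fun _ : ι => K) (I := ↑V) (J := (↑V)ᶜ)
    disjoint_compl_right (by simp)).finrank_eq]
  simp

end Supported

lemma Finset.exists_card_le_forall_not_disjoint {α : Type*} [DecidableEq α]
    (C : Finset (Finset α)) (hC : ∀ S ∈ C, S.Nonempty) :
    ∃ D : Finset α, D.card ≤ C.card ∧ ∀ S ∈ C, ¬Disjoint S D :=
  ⟨C.attach.image fun S => (hC S.1 S.2).choose, Finset.card_image_le.trans C.card_attach.le,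
    fun S hS => Finset.not_disjoint_iff.mpr
      ⟨_, (hC S hS).choose_spec, Finset.mem_image_of_mem _ (Finset.mem_attach _ ⟨S, hS⟩)⟩⟩

section ANF

variable {n : ℕ}

lemma anfEval_eq_filter_subset (M : Finset (Finset (Fin n))) {V : Finset (Fin n)}
    {x : Fin n → ZMod 2} (hx : x ∈ Pi.supported (ZMod 2) V) :
    anfEval M x = anfEval (M.filter (· ⊆ V)) x := by
  rw [anfEval, anfEval, Finset.sum_filter]
  refine Finset.sum_congr rfl fun S _ => ?_
  split_ifs with hS
  · rfl
  · obtain ⟨j, hjS, hjV⟩ := Finset.not_subset.mp hS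
    exact Finset.prod_eq_zero hjS (Pi.mem_supported.mp hx j hjV)

lemma isQuadratic_anfEval {M : Finset (Finset (Fin n))} (hM : ∀ S ∈ M, S.card ≤ 2) :
    IsQuadratic (anfEval M) :=
  isQuadratic_sum M fun S hS => isQuadratic_prod (hM S hS)

lemma crucialCount_filter_add_crucialCount_filter_not (M : Finset (Finset (Fin n)))
    (p : Finset (Fin n) → Prop) [DecidablePred p] :
    crucialCount (M.filter p) + crucialCount (M.filter fun S => ¬p S) = crucialCount M := by
  simp only [crucialCount]
  rw [Finset.filter_comm p, Finset.filter_comm fun S => ¬p S]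
  exact Finset.card_filter_add_card_filter_not p

lemma anfEval_exists_const_on_supported_of_le_one (M : Finset (Finset (Fin n)))
    (V : Finset (Fin n)) (hV : ∀ i ∈ V, crucialCount ((M.filter (· ⊆ V)).filter (i ∈ ·)) ≤ 1) :
    ∃ W ≤ Pi.supported (ZMod 2) V, ∃ v ∈ Pi.supported (ZMod 2) V,
      4 * V.card ≤ 10 * finrank (ZMod 2) W + 2 * crucialCount (M.filter (· ⊆ V)) + 5 ∧
      ∀ w ∈ W, anfEval M (v + w) = anfEval M v := by
  -- the crucial terms inside `V` are pairwise disjoint, so there are at most `#V / 3` of them,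
  -- and zeroing one variable of each leaves a quadratic function
  set C := (M.filter (· ⊆ V)).filter (3 ≤ ·.card) with hC
  have hCV : ∀ S ∈ C, S ⊆ V ∧ 3 ≤ S.card := fun S hS => by
    simp only [hC, Finset.mem_filter] at hS; exact ⟨hS.1.2, hS.2⟩
  have h3C : 3 * C.card ≤ V.card := by
    have hsum := Finset.sum_card_inter_le (s := V) (B := C) (n := 1) fun i hi => by
      simpa only [crucialCount, hC, Finset.filter_comm _ (i ∈ ·)] using hV i hi
    have hsum3 := Finset.card_nsmul_le_sum C (fun S => (V ∩ S).card) 3 fun S hS => by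
      rw [Finset.inter_eq_right.mpr (hCV S hS).1]; exact (hCV S hS).2
    simp only [smul_eq_mul] at hsum3
    omega
  obtain ⟨D, hDC, hD⟩ := Finset.exists_card_le_forall_not_disjoint C fun S hS =>
    Finset.card_pos.mp (by have := (hCV S hS).2; omega)
  have hquad : ∀ S ∈ M.filter (· ⊆ V \ D), S.card ≤ 2 := by
    intro S hS
    rw [Finset.mem_filter, Finset.subset_sdiff] at hS
    by_contra! h3
    exact hD S (Finset.mem_filter.mpr ⟨Finset.mem_filter.mpr ⟨hS.1, hS.2.1⟩, h3⟩) hS.2.2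
  have hVD : Pi.supported (ZMod 2) (V \ D) ≤ Pi.supported (ZMod 2) V :=
    Pi.supported_mono Finset.sdiff_subset
  obtain ⟨W, hW, v, hv, hdim, hconst⟩ :=
    (isQuadratic_anfEval hquad).exists_const_on_affineSubspace (Pi.supported (ZMod 2) (V \ D))
  refine ⟨W, hW.trans hVD, v, hVD hv, ?_, fun w hw => ?_⟩
  · rw [Pi.finrank_supported] at hdim
    have := Finset.card_le_card_sdiff_add_card (s := V) (t := D)
    change 4 * V.card ≤ 10 * finrank (ZMod 2) W + 2 * C.card + 5
    omega
  · rw [anfEval_eq_filter_subset M (Submodule.add_mem _ hv (hW hw)),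
      anfEval_eq_filter_subset M hv, hconst w hw]

theorem anfEval_exists_const_on_supported (M : Finset (Finset (Fin n))) (V : Finset (Fin n)) :
    ∃ W ≤ Pi.supported (ZMod 2) V, ∃ v ∈ Pi.supported (ZMod 2) V,
      4 * V.card ≤ 10 * finrank (ZMod 2) W + 2 * crucialCount (M.filter (· ⊆ V)) + 5 ∧
      ∀ w ∈ W, anfEval M (v + w) = anfEval M v := by
  induction V using Finset.strongInduction with
  | H V ih =>
  by_cases hV : ∃ i ∈ V, 2 ≤ crucialCount ((M.filter (· ⊆ V)).filter (i ∈ ·))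
  · -- zeroing `x i` costs one coordinate and kills at least two crucial terms
    obtain ⟨i, hiV, hi⟩ := hV
    obtain ⟨W, hW, v, hv, hdim, hconst⟩ := ih (V.erase i) (Finset.erase_ssubset hiV)
    have hsplit := crucialCount_filter_add_crucialCount_filter_not (M.filter (· ⊆ V)) (i ∈ ·)
    have hVi' : (M.filter (· ⊆ V)).filter (fun S => i ∉ S) = M.filter (· ⊆ V.erase i) := by
      ext S; simp [Finset.subset_erase, and_assoc]
    rw [hVi'] at hsplit
    have hVi := Pi.supported_mono (K := ZMod 2) (V.erase_subset i)
    refine ⟨W, hW.trans hVi, v, hVi hv, ?_, hconst⟩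
    rw [Finset.card_erase_of_mem hiV] at hdim
    have := Finset.card_pos.mpr ⟨i, hiV⟩
    omega
  · push Not at hV
    exact anfEval_exists_const_on_supported_of_le_one M V fun i hi =>
      Nat.le_of_lt_succ (hV i hi)

end ANF

lemma Nat.choose_sub_three_mul_pow_le {n k : ℕ} (hk : 3 ≤ k) (hkn : k ≤ n) :
    (n - 3).choose (k - 3) * n ^ 3 ≤ n.choose k * k ^ 3 := by
  obtain ⟨a, rfl⟩ : ∃ a, k = a + 3 := ⟨k - 3, by omega⟩
  obtain ⟨b, rfl⟩ : ∃ b, n = b + 3 := ⟨n - 3, by omega⟩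
  simp only [Nat.add_sub_cancel]
  have hchoose : b.choose a * ((b + 1) * (b + 2) * (b + 3))
      = (b + 3).choose (a + 3) * ((a + 1) * (a + 2) * (a + 3)) := by
    have h1 : (b + 1) * b.choose a = (b + 1).choose (a + 1) * (a + 1) :=
      Nat.add_one_mul_choose_eq b a
    have h2 : (b + 2) * (b + 1).choose (a + 1) = (b + 2).choose (a + 2) * (a + 2) :=
      Nat.add_one_mul_choose_eq (b + 1) (a + 1)
    have h3 : (b + 3) * (b + 2).choose (a + 2) = (b + 3).choose (a + 3) * (a + 3) :=
      Nat.add_one_mul_choose_eq (b + 2) (a + 2)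
    calc b.choose a * ((b + 1) * (b + 2) * (b + 3))
        = (b + 3) * (b + 2) * ((b + 1) * b.choose a) := by ring
      _ = (b + 3) * ((b + 2) * (b + 1).choose (a + 1)) * (a + 1) := by rw [h1]; ring
      _ = (b + 3) * (b + 2).choose (a + 2) * (a + 2) * (a + 1) := by rw [h2]; ring
      _ = (b + 3).choose (a + 3) * ((a + 1) * (a + 2) * (a + 3)) := by rw [h3]; ring
  refine Nat.le_of_mul_le_mul_right (c := (a + 1) * (a + 2)) ?_ (by positivity)
  calc b.choose a * (b + 3) ^ 3 * ((a + 1) * (a + 2))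
      = b.choose a * (b + 3) * ((b + 3) * (a + 1)) * ((b + 3) * (a + 2)) := by ring
    _ ≤ b.choose a * (b + 3) * ((b + 1) * (a + 3)) * ((b + 2) * (a + 3)) := by
      have h1 : (b + 3) * (a + 1) ≤ (b + 1) * (a + 3) := by nlinarith
      have h2 : (b + 3) * (a + 2) ≤ (b + 2) * (a + 3) := by nlinarith
      exact Nat.mul_le_mul (Nat.mul_le_mul_left _ h1) h2
    _ = b.choose a * ((b + 1) * (b + 2) * (b + 3)) * (a + 3) ^ 2 := by ring
    _ = (b + 3).choose (a + 3) * (a + 3) ^ 3 * ((a + 1) * (a + 2)) := by rw [hchoose]; ring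

section Averaging

variable {α : Type*} [Fintype α] [DecidableEq α]

lemma Finset.card_filter_powersetCard_superset_mul_le {S : Finset α} (hS : 3 ≤ S.card) {k : ℕ}
    (hk : k ≤ Fintype.card α) :
    #((univ.powersetCard k).filter (S ⊆ ·)) * Fintype.card α ^ 3
      ≤ (Fintype.card α).choose k * k ^ 3 := by
  rcases lt_or_ge k 3 with hk3 | hk3
  · rw [Finset.filter_false_of_mem fun K hK hSK => by
      have := Finset.card_le_card hSK; rw [(Finset.mem_powersetCard.mp hK).2] at this; omega]
    simp
  obtain ⟨T, hTS, hT⟩ := Finset.exists_subset_card_eq hS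
  calc #((univ.powersetCard k).filter (S ⊆ ·)) * Fintype.card α ^ 3
      ≤ #((univ.powersetCard k).filter (T ⊆ ·)) * Fintype.card α ^ 3 :=
        Nat.mul_le_mul_right _ <|
          Finset.card_le_card <| Finset.monotone_filter_right _ fun _ _ => hTS.trans
    _ = (Fintype.card α - 3).choose (k - 3) * Fintype.card α ^ 3 := by
        rw [Finset.card_filter_powersetCard_subset T univ k (subset_univ T) (hT ▸ hk3),
          card_univ, hT]
    _ ≤ _ := Nat.choose_sub_three_mul_pow_le hk3 hk

theorem Finset.exists_card_eq_card_filter_subset_mul_le (C : Finset (Finset α))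
    (hC : ∀ S ∈ C, 3 ≤ S.card) {k : ℕ} (hk : k ≤ Fintype.card α) :
    ∃ K : Finset α, K.card = k ∧ #(C.filter (· ⊆ K)) * Fintype.card α ^ 3 ≤ #C * k ^ 3 := by
  set T := (univ : Finset α).powersetCard k
  have hT : T.Nonempty := Finset.powersetCard_nonempty.mpr (by simpa using hk)
  have hsum : ∑ K ∈ T, #(C.filter (· ⊆ K)) * Fintype.card α ^ 3 ≤ ∑ K ∈ T, #C * k ^ 3 :=
    calc ∑ K ∈ T, #(C.filter (· ⊆ K)) * Fintype.card α ^ 3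
        = ∑ S ∈ C, #(T.filter (S ⊆ ·)) * Fintype.card α ^ 3 := by
          rw [← Finset.sum_mul, ← Finset.sum_mul]
          congr 1
          exact (Finset.sum_card_bipartiteAbove_eq_sum_card_bipartiteBelow
            (r := fun S K : Finset α => S ⊆ K)).symm
      _ ≤ ∑ S ∈ C, (Fintype.card α).choose k * k ^ 3 :=
          Finset.sum_le_sum fun S hS => card_filter_powersetCard_superset_mul_le (hC S hS) hk
      _ = ∑ K ∈ T, #C * k ^ 3 := by
          simp only [sum_const, smul_eq_mul, card_powersetCard, card_univ, T]
          ring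
  obtain ⟨K, hK, hle⟩ := Finset.exists_le_of_sum_le hT hsum
  exact ⟨K, (Finset.mem_powersetCard.mp hK).2, hle⟩

end Averaging

lemma sqrt_two_thirds_mul_rpow_le {x ε : ℝ} (hx : 1 ≤ x) (hε : ε ≤ 2) :
    √(2 / 3 * x ^ ε) ≤ x := by
  have hεx : x ^ ε ≤ x ^ 2 := by
    rw [← Real.rpow_two]
    exact Real.rpow_le_rpow_of_exponent_le hx hε
  calc √(2 / 3 * x ^ ε) ≤ √(x ^ 2) := Real.sqrt_le_sqrt (by nlinarith [sq_nonneg x])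
    _ = x := Real.sqrt_sq (by linarith)

lemma le_mul_of_mul_cube_le_rpow {c m k x ε a : ℝ} (hx : 0 < x) (hk : 0 ≤ k)
    (hc : c * x ^ 3 ≤ m * k ^ 3) (hm : m ≤ x ^ (3 - ε)) (hka : k ^ 2 ≤ a * x ^ ε) :
    c ≤ a * k := by
  have hxε : 0 < x ^ ε := Real.rpow_pos_of_pos hx ε
  have hsplit : x ^ (3 - ε) * x ^ ε = x ^ 3 := by
    rw [← Real.rpow_add hx, sub_add_cancel]; norm_cast
  have h : c * x ^ ε * x ^ 3 ≤ a * k * x ^ ε * x ^ 3 :=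
    calc c * x ^ ε * x ^ 3 = c * x ^ 3 * x ^ ε := by ring
      _ ≤ m * k ^ 3 * x ^ ε := by gcongr
      _ ≤ x ^ (3 - ε) * k ^ 3 * x ^ ε := by gcongr
      _ = k * k ^ 2 * x ^ 3 := by rw [← hsplit]; ring
      _ ≤ k * (a * x ^ ε) * x ^ 3 := by gcongr
      _ = a * k * x ^ ε * x ^ 3 := by ring
  exact le_of_mul_le_mul_right (le_of_mul_le_mul_right h (pow_pos hx 3)) hxε

lemma exists_card_eq_crucialCount_filter_subset_le {n : ℕ} (hn : 0 < n) {ε : ℝ} (hε : ε ≤ 2)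
    (M : Finset (Finset (Fin n))) (hM : (M.card : ℝ) ≤ (n : ℝ) ^ ((3 : ℝ) - ε)) :
    ∃ K : Finset (Fin n), K.card = ⌊√(2 / 3 * (n : ℝ) ^ ε)⌋₊ ∧
      (crucialCount (M.filter (· ⊆ K)) : ℝ) ≤ 2 / 3 * ⌊√(2 / 3 * (n : ℝ) ^ ε)⌋₊ := by
  set k := ⌊√(2 / 3 * (n : ℝ) ^ ε)⌋₊
  have hkn : k ≤ n :=
    Nat.floor_le_of_le (sqrt_two_thirds_mul_rpow_le (by exact_mod_cast hn) hε)
  obtain ⟨K, hK, hcK⟩ := (M.filter (3 ≤ ·.card)).exists_card_eq_card_filter_subset_mul_le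
    (fun S hS => (Finset.mem_filter.mp hS).2) (by simpa using hkn)
  refine ⟨K, hK, ?_⟩
  rw [crucialCount, Finset.filter_comm]
  refine le_mul_of_mul_cube_le_rpow (m := #(M.filter (3 ≤ ·.card))) (Nat.cast_pos.mpr hn)
    k.cast_nonneg (by exact_mod_cast (by simpa using hcK))
    ((Nat.cast_le.mpr (Finset.card_filter_le _ _)).trans hM) ?_
  rw [← Real.sq_sqrt (by positivity : (0 : ℝ) ≤ 2 / 3 * (n : ℝ) ^ ε)]
  gcongr
  exact Nat.floor_le (Real.sqrt_nonneg _)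

theorem stmt5_general {n : ℕ} (ε : ℝ) (hε2 : ε < 2)
    (f : (Fin n → ZMod 2) → ZMod 2)
    (hT : ∃ (A : (Fin n → ZMod 2) ≃ᵃ[ZMod 2] (Fin n → ZMod 2))
      (M : Finset (Finset (Fin n))),
      IsANF (f ∘ ⇑A) M ∧ (M.card : ℝ) ≤ (n : ℝ) ^ ((3 : ℝ) - ε)) :
    ∃ (W : Submodule (ZMod 2) (Fin n → ZMod 2)) (v : Fin n → ZMod 2) (u : ZMod 2),
      (4 / 15 : ℝ) * Real.sqrt (2 / 3 * (n : ℝ) ^ ε) - 3 ≤ (Module.finrank (ZMod 2) W : ℝ) ∧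
      ∀ w ∈ W, f (v + w) = u := by
  obtain ⟨A, M, hANF, hM⟩ := hT
  rcases Nat.eq_zero_or_pos n with rfl | hn
  · refine ⟨⊥, 0, f 0, ?_, by simp⟩
    have h0 : √(2 / 3 * ((0 : ℕ) : ℝ) ^ ε) ≤ 1 :=
      Real.sqrt_le_one.mpr (by have := Real.zero_rpow_le_one ε; push_cast; linarith)
    simp only [finrank_bot, Nat.cast_zero]
    linarith
  obtain ⟨K, hK, hc⟩ := exists_card_eq_crucialCount_filter_subset_le hn hε2.le M hM
  obtain ⟨W, -, v, -, hdim, hconst⟩ := anfEval_exists_const_on_supported M K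
  refine ⟨W.map (A.linear : (Fin n → ZMod 2) →ₗ[ZMod 2] (Fin n → ZMod 2)), A v, f (A v), ?_, ?_⟩
  · rw [LinearEquiv.finrank_map_eq]
    have hk := Nat.sub_one_lt_floor (√(2 / 3 * (n : ℝ) ^ ε))
    have hdimℝ : (4 * K.card : ℝ) ≤
        10 * finrank (ZMod 2) W + 2 * crucialCount (M.filter (· ⊆ K)) + 5 := by
      exact_mod_cast hdim
    rw [hK] at hdimℝ
    linarith
  · rintro _ ⟨w, hw, rfl⟩
    rw [add_comm, ← vadd_eq_add, LinearEquiv.coe_coe, ← A.map_vadd, vadd_eq_add, add_comm]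
    exact (hANF _).trans ((hconst w hw).trans (hANF v).symm)

/-- for `0 < ε < 2`, a Boolean function with algebraic thickness at most
`n^(3-ε)` (i.e. some composition with an affine bijection has sparsity at most `n^(3-ε)`)
is constant on some affine subspace of dimension at least `(4/15)·√((2/3)·n^ε) - 3`. -/
theorem stmt5 {n : ℕ} (ε : ℝ) (hε1 : 0 < ε) (hε2 : ε < 2)
    (f : (Fin n → ZMod 2) → ZMod 2)
    (hT : ∃ (A : (Fin n → ZMod 2) ≃ᵃ[ZMod 2] (Fin n → ZMod 2))
      (M : Finset (Finset (Fin n))),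
      IsANF (f ∘ ⇑A) M ∧ (M.card : ℝ) ≤ (n : ℝ) ^ ((3 : ℝ) - ε)) :
    ∃ (W : Submodule (ZMod 2) (Fin n → ZMod 2)) (v : Fin n → ZMod 2) (u : ZMod 2),
      (4 / 15 : ℝ) * Real.sqrt (2 / 3 * (n : ℝ) ^ ε) - 3 ≤ (Module.finrank (ZMod 2) W : ℝ) ∧
      ∀ w ∈ W, f (v + w) = u :=
  stmt5_general ε hε2 f hT
end
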